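/- arXiv:1507.00414 — 2 statements merged into one kernel-verified Lean document; each statement's English description precedes it below -/
import Mathlib

section
/- There exist constants c₁ > 0 and n₀ ∈ ℕ such that for all n ≥ n₀, we have 1 + ∑_{k=1}^{n} φ(k) > c₁·n². In fact, one may take any c₁ < 3/π², but it suffices to prove the statement for some c₁ > 0. -/
/-!
Write `Φ(n) = ∑_{k ≤ n} φ(k)` and count the pairs `(a, b) ∈ [1, n]²`. The coprime ones with
`a ≤ b` number `Φ(n)`, so by symmetry the coprime pairs are at most `2 Φ(n)`. A non-coprime pair
has a common divisor `2 ≤ d ≤ n`, and there are `⌊n/d⌋² ≤ n²/d²` pairs with `d` dividing both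
entries. Hence `n² ≤ 2 Φ(n) + n² ∑_{d ≥ 2} 1/d² ≤ 2 Φ(n) + (2/3) n²`, that is `Φ(n) ≥ n²/6`.
-/

open Finset
open scoped Nat

namespace Nat

theorem card_filter_coprime_Icc (b : ℕ) : #{a ∈ Icc 1 b | a.Coprime b} = φ b := by
  have hIco : Ico 1 (1 + b) = Icc 1 b := by ext; simp; omega
  simpa [hIco, coprime_comm] using filter_coprime_Ico_eq_totient b 1

theorem card_coprime_pairs_fst_le_eq_sum_totient (n : ℕ) :
    #{p ∈ Icc 1 n ×ˢ Icc 1 n | p.1 ≤ p.2 ∧ p.1.Coprime p.2} = ∑ b ∈ Icc 1 n, φ b := by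
  rw [card_filter, sum_product_right]
  refine sum_congr rfl fun b hb => ?_
  rw [← card_filter, ← card_filter_coprime_Icc]
  congr 1
  ext a
  simp only [mem_filter, mem_Icc] at hb ⊢
  omega

theorem card_coprime_pairs_le_two_mul_sum_totient (n : ℕ) :
    #{p ∈ Icc 1 n ×ˢ Icc 1 n | p.1.Coprime p.2} ≤ 2 * ∑ b ∈ Icc 1 n, φ b := by
  set A := {p ∈ Icc 1 n ×ˢ Icc 1 n | p.1 ≤ p.2 ∧ p.1.Coprime p.2}
  have hsub : {p ∈ Icc 1 n ×ˢ Icc 1 n | p.1.Coprime p.2} ⊆ A ∪ A.image Prod.swap := by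
    rintro ⟨a, b⟩ hab
    simp only [A, mem_union, mem_image, mem_filter, mem_product, Prod.exists, Prod.swap_prod_mk,
      Prod.mk.injEq] at hab ⊢
    rcases le_total a b with h | h
    · exact Or.inl ⟨hab.1, h, hab.2⟩
    · exact Or.inr ⟨b, a, ⟨⟨hab.1.2, hab.1.1⟩, h, hab.2.symm⟩, rfl, rfl⟩
  calc _ ≤ #(A ∪ A.image Prod.swap) := card_le_card hsub
    _ ≤ #A + #A := (card_union_le _ _).trans (add_le_add_right Finset.card_image_le _)
    _ = 2 * ∑ b ∈ Icc 1 n, φ b := by rw [card_coprime_pairs_fst_le_eq_sum_totient]; ring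

theorem card_filter_dvd_Icc (n d : ℕ) : #{a ∈ Icc 1 n | d ∣ a} = n / d := by
  rw [show Icc 1 n = Icc (0 + 1) n from rfl, Icc_add_one_left_eq_Ioc]
  exact Ioc_filter_dvd_card_eq_div n d

theorem card_not_coprime_pairs_le_sum_sq_div (n : ℕ) :
    #{p ∈ Icc 1 n ×ˢ Icc 1 n | ¬p.1.Coprime p.2} ≤ ∑ d ∈ Icc 2 n, (n / d) ^ 2 := by
  have hsub : {p ∈ Icc 1 n ×ˢ Icc 1 n | ¬p.1.Coprime p.2} ⊆
      (Icc 2 n).biUnion fun d => {a ∈ Icc 1 n | d ∣ a} ×ˢ {b ∈ Icc 1 n | d ∣ b} := by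
    rintro ⟨a, b⟩ hab
    simp only [mem_filter, mem_product, mem_Icc] at hab
    obtain ⟨⟨⟨ha1, han⟩, hb1, hbn⟩, hcop⟩ := hab
    have hpos : 0 < a.gcd b := gcd_pos_of_pos_left b ha1
    have hle : a.gcd b ≤ a := le_of_dvd ha1 (gcd_dvd_left a b)
    simp only [mem_biUnion, mem_product, mem_filter, mem_Icc]
    exact ⟨a.gcd b, ⟨by unfold Coprime at hcop; omega, by omega⟩,
      ⟨⟨ha1, han⟩, gcd_dvd_left a b⟩, ⟨hb1, hbn⟩, gcd_dvd_right a b⟩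
  calc _ ≤ _ := card_le_card hsub
    _ ≤ _ := card_biUnion_le
    _ = _ := by simp only [card_product, card_filter_dvd_Icc, sq]

theorem sq_le_two_mul_sum_totient_add_sum_sq_div (n : ℕ) :
    n ^ 2 ≤ 2 * ∑ k ∈ Icc 1 n, φ k + ∑ d ∈ Icc 2 n, (n / d) ^ 2 := by
  have hcard : #(Icc 1 n ×ˢ Icc 1 n) = n ^ 2 := by simp [sq]
  rw [← hcard, ← card_filter_add_card_filter_not (fun p : ℕ × ℕ => p.1.Coprime p.2)]
  exact add_le_add (card_coprime_pairs_le_two_mul_sum_totient n)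
    (card_not_coprime_pairs_le_sum_sq_div n)

end Nat

theorem sum_Icc_two_inv_sq_le_sub (n : ℕ) (hn : 1 ≤ n) :
    ∑ d ∈ Icc 2 n, ((d : ℝ) ^ 2)⁻¹ ≤ 2 / 3 - 2 / (2 * n + 1) := by
  induction n, hn using Nat.le_induction with
  | base => norm_num
  | succ m hm ih =>
    rw [sum_Icc_succ_top (by omega)]
    have hm' : (1 : ℝ) ≤ m := by exact_mod_cast hm
    -- `1/d² < 1/(d - 1/2) - 1/(d + 1/2)`, which telescopes
    have hstep :
        (((m + 1 : ℕ) : ℝ) ^ 2)⁻¹ ≤ 2 / (2 * m + 1) - 2 / (2 * ((m + 1 : ℕ) : ℝ) + 1) := by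
      push_cast
      rw [div_sub_div _ _ (by positivity) (by positivity), inv_eq_one_div,
        div_le_div_iff₀ (by positivity) (by positivity)]
      nlinarith
    linarith

theorem sum_Icc_two_inv_sq_le (n : ℕ) : ∑ d ∈ Icc 2 n, ((d : ℝ) ^ 2)⁻¹ ≤ 2 / 3 := by
  rcases Nat.eq_zero_or_pos n with rfl | hn
  · norm_num
  · have : (0 : ℝ) ≤ 2 / (2 * n + 1) := by positivity
    linarith [sum_Icc_two_inv_sq_le_sub n hn]

theorem sq_div_six_le_sum_totient (n : ℕ) : (n : ℝ) ^ 2 / 6 ≤ ∑ k ∈ Icc 1 n, (φ k : ℝ) := by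
  have hfloor : ∀ d ∈ Icc 2 n, ((n / d : ℕ) : ℝ) ^ 2 ≤ (n : ℝ) ^ 2 * ((d : ℝ) ^ 2)⁻¹ := by
    intro d _
    rw [← div_eq_mul_inv, ← div_pow]
    exact pow_le_pow_left₀ (Nat.cast_nonneg _) Nat.cast_div_le 2
  have hcount : (n : ℝ) ^ 2 ≤
      2 * ∑ k ∈ Icc 1 n, (φ k : ℝ) + ∑ d ∈ Icc 2 n, ((n / d : ℕ) : ℝ) ^ 2 := by
    exact_mod_cast Nat.sq_le_two_mul_sum_totient_add_sum_sq_div n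
  have htail : ∑ d ∈ Icc 2 n, ((n / d : ℕ) : ℝ) ^ 2 ≤ (n : ℝ) ^ 2 * (2 / 3) := by
    calc _ ≤ ∑ d ∈ Icc 2 n, (n : ℝ) ^ 2 * ((d : ℝ) ^ 2)⁻¹ := sum_le_sum hfloor
      _ = (n : ℝ) ^ 2 * ∑ d ∈ Icc 2 n, ((d : ℝ) ^ 2)⁻¹ := (mul_sum ..).symm
      _ ≤ _ := mul_le_mul_of_nonneg_left (sum_Icc_two_inv_sq_le n) (by positivity)
  linarith

theorem totient_sum_lower_bound :
    ∃ c₁ : ℝ, 0 < c₁ ∧ ∃ n₀ : ℕ, ∀ n : ℕ, n₀ ≤ n →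
      c₁ * (n : ℝ) ^ 2 < 1 + ∑ k ∈ Finset.Icc 1 n, (Nat.totient k : ℝ) := by
  refine ⟨1 / 6, by norm_num, 0, fun n _ => ?_⟩
  linarith [sq_div_six_le_sum_totient n]
end

section
/- Let h : [0, π] → ℝ be continuous with h > 0 on (0, π), and suppose h is continuously differentiable on an interval [a₁, a₂] ⊆ (0, π) with h' ≥ c₁ > 0 there. Then for a ∈ [a₁, a₂] and small δ > 0, ∫_a^{a+δ} h(s)/√(h(s)² − h(a)²) ds ≤ √(h(a+δ)² − h(a)²)/c₁. -/
open MeasureTheory Set intervalIntegral Real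

theorem boundary_integral_bound (h : ℝ → ℝ) (a₁ a₂ c₁ δ : ℝ)
    (hc₁ : 0 < c₁) (ha : a₁ ≤ a₂) (hδ : 0 < δ)
    (hsmooth : ContDiff ℝ (⊤ : ℕ∞) h)
    (hpos : ∀ s ∈ Set.Icc a₁ (a₂ + δ), 0 < h s)
    (hderiv : ∀ s ∈ Set.Icc a₁ (a₂ + δ), c₁ ≤ deriv h s)
    (a : ℝ) (haI : a ∈ Set.Icc a₁ a₂) :
    ∫ s in a..(a + δ), h s / Real.sqrt ((h s) ^ 2 - (h a) ^ 2)
      ≤ Real.sqrt ((h (a + δ)) ^ 2 - (h a) ^ 2) / c₁ := by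
  obtain ⟨ha1, ha2⟩ := haI
  have hdiff : Differentiable ℝ h := hsmooth.differentiable (by simp)
  have hcont : Continuous h := hdiff.continuous
  have hsub : Set.Icc a (a + δ) ⊆ Set.Icc a₁ (a₂ + δ) := by
    apply Set.Icc_subset_Icc ha1 (by linarith)
  have haD : a ∈ Set.Icc a₁ (a₂ + δ) := ⟨ha1, by linarith⟩
  have hapos : 0 < h a := hpos a haD
  -- monotonicity with rate c₁
  have hmono : ∀ x ∈ Set.Icc a₁ (a₂ + δ), ∀ y ∈ Set.Icc a₁ (a₂ + δ), x ≤ y →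
      c₁ * (y - x) ≤ h y - h x := by
    intro x hx y hy hxy
    refine (convex_Icc a₁ (a₂ + δ)).mul_sub_le_image_sub_of_le_deriv hcont.continuousOn
      (hdiff.differentiableOn) ?_ x hx y hy hxy
    intro z hz
    exact hderiv z (interior_subset hz)
  have hgt : ∀ s ∈ Set.Ioc a (a + δ), 0 < h s ^ 2 - h a ^ 2 := by
    intro s hs
    have hsD : s ∈ Set.Icc a₁ (a₂ + δ) := hsub ⟨hs.1.le, hs.2⟩
    have := hmono a haD s hsD hs.1.le
    have h1 : h a < h s := by nlinarith [hs.1]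
    nlinarith
  -- bound function and integrability
  obtain ⟨m, _, hMon⟩ := (isCompact_Icc (a := a₁) (b := a₂ + δ)).exists_isMaxOn
    ⟨a₁, le_refl a₁, by linarith⟩ hcont.continuousOn
  set M := h m with hMdef
  have hM : ∀ s ∈ Set.Icc a₁ (a₂ + δ), h s ≤ M := fun s hs => hMon hs
  set C : ℝ := M / Real.sqrt (c₁ * h a) with hC
  set φ : ℝ → ℝ := fun s => h s / Real.sqrt (h s ^ 2 - h a ^ 2) with hφ
  have hφmeas : Measurable φ := by
    exact (hcont.measurable).div ((continuous_sqrt.comp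
      (((hcont.pow 2).sub continuous_const))).measurable)
  have hψint : IntegrableOn (fun s => C * (s - a) ^ (-(1/2) : ℝ)) (Set.Icc a (a + δ)) := by
    have h1 : IntervalIntegrable (fun x : ℝ => x ^ (-(1/2) : ℝ)) volume 0 δ :=
      intervalIntegral.intervalIntegrable_rpow' (by norm_num)
    have h2 := (h1.comp_sub_right a).const_mul C
    rw [zero_add, add_comm δ a] at h2
    exact (intervalIntegrable_iff_integrableOn_Icc_of_le (by linarith)).mp h2
  have hbound : ∀ s ∈ Set.Ioc a (a + δ), φ s ≤ C * (s - a) ^ (-(1/2) : ℝ) := by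
    intro s hs
    have hsD : s ∈ Set.Icc a₁ (a₂ + δ) := hsub ⟨hs.1.le, hs.2⟩
    have hspos : 0 < h s := hpos s hsD
    have hu : 0 < h s ^ 2 - h a ^ 2 := hgt s hs
    have hsa : 0 < s - a := by linarith [hs.1]
    have hkey : c₁ * h a * (s - a) ≤ h s ^ 2 - h a ^ 2 := by
      have h0 := hmono a haD s hsD hs.1.le
      have h2 : c₁ * (s - a) * h a ≤ (h s - h a) * (h s + h a) :=
        mul_le_mul h0 (by linarith) hapos.le (by nlinarith)
      nlinarith
    have hden : Real.sqrt (c₁ * h a * (s - a)) ≤ Real.sqrt (h s ^ 2 - h a ^ 2) :=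
      Real.sqrt_le_sqrt hkey
    have hdenpos : 0 < Real.sqrt (c₁ * h a * (s - a)) :=
      Real.sqrt_pos.mpr (by positivity)
    have h1 : φ s ≤ M / Real.sqrt (c₁ * h a * (s - a)) := by
      exact div_le_div₀ (le_trans hspos.le (hM s hsD)) (hM s hsD) hdenpos hden
    calc φ s ≤ M / Real.sqrt (c₁ * h a * (s - a)) := h1
      _ = C * (s - a) ^ (-(1/2) : ℝ) := by
          rw [Real.sqrt_mul (by positivity), hC, Real.rpow_neg hsa.le,
            ← Real.sqrt_eq_rpow]
          field_simp
  have hφnonneg : ∀ s ∈ Set.Ioc a (a + δ), 0 ≤ φ s := by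
    intro s hs
    have := hpos s (hsub ⟨hs.1.le, hs.2⟩)
    positivity
  have hφint : IntegrableOn φ (Set.Icc a (a + δ)) := by
    refine hψint.integrable.mono' hφmeas.aestronglyMeasurable ?_
    rw [ae_restrict_iff' measurableSet_Icc]
    refine Filter.Eventually.of_forall fun s hs => ?_
    rcases eq_or_lt_of_le hs.1 with heq | hlt
    · rw [← heq]
      simp [φ, Real.zero_rpow (by norm_num : (-(1/2) : ℝ) ≠ 0)]
    · have hsIoc : s ∈ Set.Ioc a (a + δ) := ⟨hlt, hs.2⟩
      rw [Real.norm_eq_abs, abs_of_nonneg (hφnonneg s hsIoc)]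
      exact hbound s hsIoc
  -- FTC comparison
  set G : ℝ → ℝ := fun s => Real.sqrt (h s ^ 2 - h a ^ 2) / c₁ with hG
  set G' : ℝ → ℝ := fun s => h s * deriv h s / Real.sqrt (h s ^ 2 - h a ^ 2) / c₁ with hG'
  have hGcont : ContinuousOn G (Set.Icc a (a + δ)) := by
    exact ((continuous_sqrt.comp ((hcont.pow 2).sub continuous_const)).div_const c₁).continuousOn
  have hGderiv : ∀ x ∈ Set.Ioo a (a + δ), HasDerivWithinAt G (G' x) (Set.Ioi x) x := by
    intro x hx
    have hu : 0 < h x ^ 2 - h a ^ 2 := hgt x ⟨hx.1, hx.2.le⟩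
    have h1 : HasDerivAt (fun s => h s ^ 2 - h a ^ 2)
        (2 * h x ^ 1 * deriv h x) x := by
      simpa using ((hdiff x).hasDerivAt.pow 2).sub_const (h a ^ 2)
    have h2 := (Real.hasDerivAt_sqrt hu.ne').comp x h1
    have hsq : Real.sqrt (h x ^ 2 - h a ^ 2) ≠ 0 := (Real.sqrt_pos.mpr hu).ne'
    have heq2 : G' x = 1 / (2 * Real.sqrt (h x ^ 2 - h a ^ 2)) * (2 * h x ^ 1 * deriv h x) / c₁ := by
      simp only [hG', pow_one]
      field_simp
    have h3 : HasDerivAt G (G' x) x := by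
      rw [heq2]; exact h2.div_const c₁
    exact h3.hasDerivWithinAt
  have hφle : ∀ x ∈ Set.Ioo a (a + δ), φ x ≤ G' x := by
    intro x hx
    have hxD : x ∈ Set.Icc a₁ (a₂ + δ) := hsub ⟨hx.1.le, hx.2.le⟩
    have hu : 0 < h x ^ 2 - h a ^ 2 := hgt x ⟨hx.1, hx.2.le⟩
    have hxpos : 0 < h x := hpos x hxD
    have hd : c₁ ≤ deriv h x := hderiv x hxD
    have hsq : 0 < Real.sqrt (h x ^ 2 - h a ^ 2) := Real.sqrt_pos.mpr hu
    simp only [hφ, hG']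
    rw [div_div, div_le_div_iff₀ hsq (by positivity)]
    nlinarith [mul_le_mul_of_nonneg_left hd (mul_nonneg hxpos.le hsq.le)]
  have key := intervalIntegral.integral_le_sub_of_hasDeriv_right_of_le (by linarith : a ≤ a + δ)
    hGcont hGderiv hφint hφle
  have hGa : G a = 0 := by simp [hG]
  rw [hGa, sub_zero] at key
  simpa [hG] using key
end
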